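/- Fix a resolution level R ≥ 1, an integer h with 1 ≤ h ≤ 2^{R−1}, and g ∈ ℕ. Then for every x in the open interval ((h−1)/2^{R−1}, h/2^{R−1}), the derivative of the Legendre wavelet ψ_{h,g} satisfies ψ_{h,g}′(x) = 2^R · Σ_{j=0, j+g odd}^{g−1} √((2g+1)(2j+1)) · ψ_{h,j}(x), where the sum runs over those j ∈ {0, 1, …, g−1} for which j + g is odd. -/

import Mathlib

/-!
On the interior of its support, `ψ_{h,g}` is a rescaled copy of `P_g` composed with the affine
map `x ↦ 2^R x − 2h + 1`, whose slope produces the factor `2^R`. Everything then follows from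
the classical identity `P_g' = Σ_{j < g, j + g odd} (2j + 1) P_j`, i.e. the recurrence
`P_{m+2}' = P_m' + (2m + 3) P_{m+1}`. With `u = X² − 1`, the recurrence comes from the Rodrigues
formula and `(u^{m+2})'' = 2(m + 2) ((2m + 3) u^{m+1} + 2(m + 1) u^m)`, using `X² = u + 1`.
-/

/-- The Legendre polynomial of degree `g` on `[−1,1]`, via the Rodrigues formula
`P_g(y) = (1/(2^g g!)) (d/dy)^g [(y² − 1)^g]`. -/
noncomputable def legendreP (g : ℕ) (y : ℝ) : ℝ :=
  (1 / ((2 : ℝ) ^ g * (g.factorial : ℝ))) * iteratedDeriv g (fun z : ℝ => (z ^ 2 - 1) ^ g) y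

/-- The Legendre wavelet `ψ_{h,g}` at resolution level `R`. -/
noncomputable def legendreWavelet (R h g : ℕ) (x : ℝ) : ℝ :=
  if ((h : ℝ) - 1) / 2 ^ (R - 1) ≤ x ∧ x ≤ (h : ℝ) / 2 ^ (R - 1) then
    (2 : ℝ) ^ ((R : ℝ) / 2) * Real.sqrt ((g : ℝ) + 1 / 2) *
      legendreP g (2 ^ R * x - 2 * (h : ℝ) + 1)
  else 0

open Polynomial

namespace Polynomial

theorem iteratedDeriv_eval {𝕜 : Type*} [NontriviallyNormedField 𝕜] (p : 𝕜[X]) (n : ℕ) :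
    iteratedDeriv n (fun x => p.eval x) = fun x => (derivative^[n] p).eval x := by
  induction n with
  | zero => simp
  | succ n ih =>
    rw [iteratedDeriv_succ, ih, Function.iterate_succ_apply']
    funext x
    exact Polynomial.deriv _

variable {K : Type*} [Field K]

noncomputable def legendre (g : ℕ) : K[X] :=
  C ((2 ^ g * g.factorial : K)⁻¹) * derivative^[g] ((X ^ 2 - 1) ^ g)

theorem legendre_zero : (legendre 0 : K[X]) = 1 := by
  simp [legendre]

theorem legendre_one [CharZero K] : (legendre 1 : K[X]) = X := by
  simp [legendre, one_add_one_eq_two, ← mul_assoc, ← C_mul]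

theorem derivative_X_sq_sub_one_pow (n : ℕ) :
    derivative ((X ^ 2 - 1 : K[X]) ^ (n + 1)) = C (2 * (n + 1 : K)) * X * (X ^ 2 - 1) ^ n := by
  rw [derivative_pow, Nat.add_sub_cancel, derivative_sub, derivative_X_pow, derivative_one]
  simp only [map_mul, map_add, map_ofNat, map_natCast, map_one]
  push_cast
  ring

theorem derivative_derivative_X_sq_sub_one_pow (m : ℕ) :
    derivative (derivative ((X ^ 2 - 1 : K[X]) ^ (m + 2))) =
      C (2 * (m + 2 : K)) * (C (2 * m + 3 : K) * (X ^ 2 - 1) ^ (m + 1)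
        + C (2 * (m + 1 : K)) * (X ^ 2 - 1) ^ m) := by
  rw [derivative_X_sq_sub_one_pow, derivative_mul, derivative_X_sq_sub_one_pow, derivative_mul,
    derivative_C, derivative_X]
  simp only [map_mul, map_add, map_ofNat, map_natCast, map_one]
  push_cast
  ring

theorem inv_two_pow_mul_factorial_succ_mul [CharZero K] (k : ℕ) :
    (2 ^ (k + 1) * (k + 1).factorial : K)⁻¹ * (2 * (k + 1 : K)) = (2 ^ k * k.factorial : K)⁻¹ := by
  rw [Nat.factorial_succ]
  push_cast
  field_simp
  ring

theorem derivative_legendre_add_two [CharZero K] (m : ℕ) :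
    derivative (legendre (m + 2) : K[X]) =
      derivative (legendre m) + C (2 * m + 3 : K) * legendre (m + 1) := by
  have hD : derivative^[m + 3] ((X ^ 2 - 1 : K[X]) ^ (m + 2)) =
      C (2 * (m + 2 : K)) * (C (2 * m + 3 : K) * derivative^[m + 1] ((X ^ 2 - 1) ^ (m + 1))
        + C (2 * (m + 1 : K)) * derivative^[m + 1] ((X ^ 2 - 1) ^ m)) := by
    rw [Function.iterate_succ_apply, Function.iterate_succ_apply,
      derivative_derivative_X_sq_sub_one_pow, iterate_derivative_C_mul, iterate_map_add,
      iterate_derivative_C_mul, iterate_derivative_C_mul]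
  have hc₁ : ((2 : K) ^ (m + 2) * (m + 2).factorial)⁻¹ * (2 * (m + 2 : K)) =
      ((2 : K) ^ (m + 1) * (m + 1).factorial)⁻¹ := by
    convert inv_two_pow_mul_factorial_succ_mul (K := K) (m + 1) using 3
    push_cast
    ring
  have hc₀ := inv_two_pow_mul_factorial_succ_mul (K := K) m
  simp only [legendre, derivative_C_mul, ← Function.iterate_succ_apply' derivative, hD]
  rw [← hc₀, ← hc₁]
  simp only [map_mul]
  ring

theorem derivative_legendre [CharZero K] (g : ℕ) :
    derivative (legendre g : K[X]) =
      ∑ j ∈ (Finset.range g).filter (fun j => Odd (j + g)), C (2 * j + 1 : K) * legendre j := by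
  induction g using Nat.twoStepInduction with
  | zero => simp [legendre_zero]
  | one => simp [legendre_zero, legendre_one, Finset.filter_singleton]
  | more n ih _ =>
    have hrange : (Finset.range (n + 2)).filter (fun j => Odd (j + (n + 2)))
        = insert (n + 1) ((Finset.range n).filter (fun j => Odd (j + n))) := by
      ext j
      simp only [Finset.mem_filter, Finset.mem_insert, Finset.mem_range, Nat.odd_iff]
      omega
    rw [derivative_legendre_add_two, ih, hrange, Finset.sum_insert (by simp), add_comm]
    congr 3
    push_cast
    ring

end Polynomial

theorem legendreP_eq_eval_legendre (g : ℕ) (y : ℝ) : legendreP g y = (legendre g).eval y := by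
  have hpoly : (fun z : ℝ => (z ^ 2 - 1) ^ g) = fun z => ((X ^ 2 - 1 : ℝ[X]) ^ g).eval z := by
    funext z
    simp
  rw [legendreP, legendre, eval_mul, eval_C, one_div, hpoly, iteratedDeriv_eval]

theorem Real.sqrt_mul_mul_sqrt_add_half {a b : ℝ} (ha : 0 ≤ 2 * a + 1) (hb : 0 ≤ 2 * b + 1) :
    √((2 * a + 1) * (2 * b + 1)) * √(b + 1 / 2) = √(a + 1 / 2) * (2 * b + 1) := by
  rw [← Real.sqrt_mul (mul_nonneg ha hb),
    show (2 * a + 1) * (2 * b + 1) * (b + 1 / 2) = (a + 1 / 2) * (2 * b + 1) ^ 2 by ring,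
    Real.sqrt_mul' _ (sq_nonneg _), Real.sqrt_sq hb]

section Wavelet

variable {R h g : ℕ} {x : ℝ}

theorem legendreWavelet_eq_of_mem_Icc
    (hx : x ∈ Set.Icc (((h : ℝ) - 1) / 2 ^ (R - 1)) ((h : ℝ) / 2 ^ (R - 1))) :
    legendreWavelet R h g x =
      2 ^ ((R : ℝ) / 2) * √((g : ℝ) + 1 / 2) * (legendre g).eval (2 ^ R * x - 2 * (h : ℝ) + 1) := by
  rw [legendreWavelet, if_pos (Set.mem_Icc.mp hx), legendreP_eq_eval_legendre]

theorem hasDerivAt_legendreWavelet (hx₁ : ((h : ℝ) - 1) / 2 ^ (R - 1) < x)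
    (hx₂ : x < (h : ℝ) / 2 ^ (R - 1)) :
    HasDerivAt (legendreWavelet R h g)
      (2 ^ ((R : ℝ) / 2) * √((g : ℝ) + 1 / 2) *
        ((derivative (legendre g)).eval (2 ^ R * x - 2 * (h : ℝ) + 1) * 2 ^ R)) x := by
  have hlocal : legendreWavelet R h g =ᶠ[nhds x] fun z =>
      2 ^ ((R : ℝ) / 2) * √((g : ℝ) + 1 / 2) * (legendre g).eval (2 ^ R * z - 2 * (h : ℝ) + 1) := by
    filter_upwards [Ioo_mem_nhds hx₁ hx₂] with z hz
    exact legendreWavelet_eq_of_mem_Icc (Set.Ioo_subset_Icc_self hz)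
  have haffine : HasDerivAt (fun z : ℝ => 2 ^ R * z - 2 * (h : ℝ) + 1) (2 ^ R) x := by
    simpa using (((hasDerivAt_id x).const_mul (2 ^ R : ℝ)).sub_const (2 * (h : ℝ))).add_const 1
  exact ((((legendre g).hasDerivAt _).comp x haffine).const_mul _).congr_of_eventuallyEq hlocal

end Wavelet

theorem legendreWavelet_deriv_general (R h g : ℕ)
    (x : ℝ) (hx₁ : ((h : ℝ) - 1) / 2 ^ (R - 1) < x) (hx₂ : x < (h : ℝ) / 2 ^ (R - 1)) :
    deriv (legendreWavelet R h g) x =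
      2 ^ R * ∑ j ∈ (Finset.range g).filter (fun j => Odd (j + g)),
        Real.sqrt (((2 * g + 1 : ℕ) : ℝ) * ((2 * j + 1 : ℕ) : ℝ)) * legendreWavelet R h j x := by
  rw [(hasDerivAt_legendreWavelet hx₁ hx₂).deriv, derivative_legendre, eval_finsetSum,
    Finset.sum_mul, Finset.mul_sum, Finset.mul_sum]
  refine Finset.sum_congr rfl fun j _ => ?_
  rw [legendreWavelet_eq_of_mem_Icc ⟨hx₁.le, hx₂.le⟩, eval_mul, eval_C]
  push_cast
  linear_combination (-(2 ^ R * 2 ^ ((R : ℝ) / 2) *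
    (legendre j).eval (2 ^ R * x - 2 * (h : ℝ) + 1))) *
    Real.sqrt_mul_mul_sqrt_add_half (a := g) (b := j) (by positivity) (by positivity)

/-- On the interior of its support interval, the derivative of the Legendre wavelet satisfies
`ψ_{h,g}′(x) = 2^R Σ_{j < g, j+g odd} √((2g+1)(2j+1)) ψ_{h,j}(x)`. -/
theorem legendreWavelet_deriv (R h g : ℕ) (hR : 1 ≤ R) (hh₁ : 1 ≤ h) (hh₂ : h ≤ 2 ^ (R - 1))
    (x : ℝ) (hx₁ : ((h : ℝ) - 1) / 2 ^ (R - 1) < x) (hx₂ : x < (h : ℝ) / 2 ^ (R - 1)) :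
    deriv (legendreWavelet R h g) x =
      2 ^ R * ∑ j ∈ (Finset.range g).filter (fun j => Odd (j + g)),
        Real.sqrt (((2 * g + 1 : ℕ) : ℝ) * ((2 * j + 1 : ℕ) : ℝ)) * legendreWavelet R h j x :=
  legendreWavelet_deriv_general R h g x hx₁ hx₂
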